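/- arXiv:1107.2299 — 7 statements merged into one kernel-verified Lean document; each statement's English description precedes it below -/
import Mathlib

section
/- Let (V,d) be a finite metric space in which all pairwise distances are distinct, and let H be a graph on V. For a nonempty set X ⊆ V and a vertex x, let y_X(x) denote the unique point of X nearest to x. Say that H has complete visibility for X if for every x ∈ V there is a path in H from y_X(x) to x every vertex w of which satisfies d(w, y_X(x)) < d(w, z) for all z ∈ X with z ≠ y_X(x). Then H has complete visibility for every nonempty X ⊆ V if and only if for every ordered pair (x,y) of vertices there is a path in H from y to x all of whose vertices lie in the safe set S(x,y). -/
/-!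
For the forward direction, apply complete visibility to `X = {y} ∪ D(x,y)`: in this set `y` is the
point nearest to `x`, and a vertex that beats every competitor in `X` lies in `S(x,y)`.
Conversely, if `y` is the point of `X` nearest to `x`, every competitor `z ∈ X` lies in `D(x,y)`,
so a safe vertex beats it; the vertex `y` itself beats it since `dist y y = 0 < dist y z`.
-/

section

variable {V : Type*} (H : SimpleGraph V)

def safeSet [Dist V] (x y : V) : Set V :=
  {w | ∀ z, dist x y < dist x z → dist w y < dist w z} ∪ {y}

theorem exists_walk_support_subset_safeSet [Dist V]
    (hvis : ∀ X : Set V, X.Nonempty → ∀ x : V, ∀ y ∈ X,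
      (∀ z ∈ X, z ≠ y → dist x y < dist x z) →
      ∃ p : H.Walk y x, ∀ w ∈ p.support, ∀ z ∈ X, z ≠ y → dist w y < dist w z)
    (x y : V) : ∃ p : H.Walk y x, ∀ w ∈ p.support, w ∈ safeSet x y := by
  have hnearest : ∀ z ∈ ({y} ∪ {z | dist x y < dist x z} : Set V), z ≠ y →
      dist x y < dist x z := by
    rintro z (rfl | hz) hzy
    · exact absurd rfl hzy
    · exact hz
  obtain ⟨p, hp⟩ := hvis _ ⟨y, Or.inl rfl⟩ x y (Or.inl rfl) hnearest
  exact ⟨p, fun w hw => Or.inl fun z hz => hp w hw z (Or.inr hz) (fun hzy => by simp [hzy] at hz)⟩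

theorem exists_walk_of_forall_safeSet [MetricSpace V]
    (hsafe : ∀ x y : V, ∃ p : H.Walk y x, ∀ w ∈ p.support, w ∈ safeSet x y)
    (X : Set V) (x : V) (y : V)
    (hnearest : ∀ z ∈ X, z ≠ y → dist x y < dist x z) :
    ∃ p : H.Walk y x, ∀ w ∈ p.support, ∀ z ∈ X, z ≠ y → dist w y < dist w z := by
  obtain ⟨p, hp⟩ := hsafe x y
  refine ⟨p, fun w hw z hzX hzy => ?_⟩
  rcases hp w hw with hw | rfl
  · exact hw z (hnearest z hzX hzy)
  · simpa using dist_pos.mpr (Ne.symm hzy)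

end

theorem stmt0_general {V : Type*} [MetricSpace V]
    (H : SimpleGraph V) :
    -- complete visibility for every nonempty X:
    (∀ X : Set V, X.Nonempty → ∀ x : V, ∀ y ∈ X,
        (∀ z ∈ X, z ≠ y → dist x y < dist x z) →
        ∃ p : H.Walk y x, ∀ w ∈ p.support, ∀ z ∈ X, z ≠ y → dist w y < dist w z) ↔
    -- safe signaling paths for every ordered pair:
    (∀ x y : V, ∃ p : H.Walk y x, ∀ w ∈ p.support,
        w ∈ ({w' : V | ∀ z : V, dist x y < dist x z → dist w' y < dist w' z} ∪ {y})) :=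
  ⟨exists_walk_support_subset_safeSet H,
    fun hsafe X _ x y _ => exists_walk_of_forall_safeSet H hsafe X x y⟩

/-- Characterization of correct iBGP signaling graphs via safe sets: a signaling
graph `H` on a finite metric space (with all pairwise distances distinct) has the
complete visibility property for every nonempty set `X` of egress routers iff for
every ordered pair `(x,y)` there is a path in `H` from `y` to `x` all of whose
vertices lie in the safe set
`S(x,y) = {w | ∀ z, dist x y < dist x z → dist w y < dist w z} ∪ {y}`. -/
theorem stmt0 {V : Type*} [Fintype V] [MetricSpace V]
    (hdistinct : ∀ p q r s : V, p ≠ q → r ≠ s → dist p q = dist r s →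
      ({p, q} : Set V) = {r, s})
    (H : SimpleGraph V) :
    -- complete visibility for every nonempty X:
    (∀ X : Set V, X.Nonempty → ∀ x : V, ∀ y ∈ X,
        (∀ z ∈ X, z ≠ y → dist x y < dist x z) →
        ∃ p : H.Walk y x, ∀ w ∈ p.support, ∀ z ∈ X, z ≠ y → dist w y < dist w z) ↔
    -- safe signaling paths for every ordered pair:
    (∀ x y : V, ∃ p : H.Walk y x, ∀ w ∈ p.support,
        w ∈ ({w' : V | ∀ z : V, dist x y < dist x z → dist w' y < dist w' z} ∪ {y})) :=
  stmt0_general H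
end

section
/- Let V be a finite set with |V| = n ≥ 2, fix distinct x, y ∈ V and a set S ⊆ V with x, y ∈ S, and let c assign to each unordered pair e of vertices a real number c_e ∈ [0,1] such that for every set X with x ∈ X ⊆ S \ {y}, the sum of c_e over all edges e with one endpoint in X and the other in S \ X is at least 1. Let E' be the random edge set obtained by including each unordered pair e independently with probability min{12 · c_e · |S| · ln n, 1}. Then with probability at least 1 − 1/n³, E' contains an x–y path all of whose vertices lie in S. -/
/-!
If the sampled graph has no `x`–`y` path inside `S`, the vertices reachable from `x` inside `S`
form a cut `x ∈ X ⊆ S \ {y}` none of whose crossing edges was sampled. For a fixed cut this has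
probability `∏ (1 - p_e) ≤ exp (-∑ 12 c_e |S| ln n) ≤ n ^ (-12 |S|)` by the cut condition, and a
union bound over the at most `2 ^ |S|` cuts leaves `2 ^ |S| n ^ (-12 |S|) ≤ n ^ (-3)`.
-/

open MeasureTheory SimpleGraph Finset
open scoped ENNReal NNReal

set_option linter.deprecated false

section Cuts

variable {V : Type*} [DecidableEq V]

def cutEdges [Fintype V] (S X : Finset V) : Finset (Sym2 V) :=
  univ.filter fun e => ∃ a b : V, e = s(a, b) ∧ a ∈ X ∧ b ∈ S ∧ b ∉ X

theorem exists_cut_not_adj_of_no_walk_within (G : SimpleGraph V) {S : Finset V} {x y : V}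
    (hx : x ∈ S) (h : ¬ ∃ p : G.Walk x y, ∀ v ∈ p.support, v ∈ S) :
    ∃ X : Finset V, x ∈ X ∧ X ⊆ S.erase y ∧ ∀ a ∈ X, ∀ b ∈ S, b ∉ X → ¬ G.Adj a b := by
  classical
  set X := S.filter fun v => ∃ p : G.Walk x v, ∀ u ∈ p.support, u ∈ S
  have hyX : y ∉ X := fun hy => h (mem_filter.1 hy).2
  refine ⟨X, mem_filter.2 ⟨hx, .nil, by simpa using hx⟩,
    fun v hv => mem_erase.2 ⟨fun hvy => hyX (hvy ▸ hv), (mem_filter.1 hv).1⟩, ?_⟩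
  rintro a ha b hb hbX hab
  obtain ⟨-, p, hp⟩ := mem_filter.1 ha
  refine hbX (mem_filter.2 ⟨hb, p.concat hab, fun u hu => ?_⟩)
  rw [Walk.support_concat, List.mem_append, List.mem_singleton] at hu
  rcases hu with hu | rfl
  · exact hp u hu
  · exact hb

theorem forall_cutEdges_eq_false [Fintype V] {f : Sym2 V → Bool} {S X : Finset V}
    (h : ∀ a ∈ X, ∀ b ∈ S, b ∉ X → ¬ (fromEdgeSet {e | f e = true}).Adj a b) :
    ∀ e ∈ cutEdges S X, f e = false := by
  intro e he
  obtain ⟨-, a, b, rfl, ha, hb, hbX⟩ := mem_filter.1 he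
  have hab : a ≠ b := fun hab => hbX (hab ▸ ha)
  simpa [fromEdgeSet_adj, hab] using h a ha b hb hbX

end Cuts

section Bernoulli

variable {ι : Type*} [Fintype ι]

theorem pi_bernoulli_forall_eq_false (q : ι → ℝ≥0) (hq : ∀ i, q i ≤ 1) (T : Finset ι) :
    Measure.pi (fun i => (PMF.bernoulli (q i) (hq i)).toMeasure) {f | ∀ i ∈ T, f i = false} =
      ∏ i ∈ T, (1 - (q i : ℝ≥0∞)) := by
  classical
  have hset : {f : ι → Bool | ∀ i ∈ T, f i = false} =
      Set.univ.pi fun i => if i ∈ T then {false} else Set.univ := by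
    ext f
    simp only [Set.mem_setOf_eq, Set.mem_pi, Set.mem_univ, true_implies]
    refine forall_congr' fun i => ?_
    split_ifs <;> simp [*]
  rw [hset, Measure.pi_pi, ← prod_subset (subset_univ T)]
  · refine prod_congr rfl fun i hi => ?_
    rw [if_pos hi, PMF.toMeasure_apply_singleton _ _ (measurableSet_singleton _),
      PMF.bernoulli_apply]
    simp
  · intro i _ hi
    rw [if_neg hi, measure_univ]

theorem one_sub_min_toNNReal_one_le_exp_neg (a : ℝ) :
    1 - ((min a.toNNReal 1 : ℝ≥0) : ℝ≥0∞) ≤ ENNReal.ofReal (Real.exp (-a)) := by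
  rcases le_total 1 a with h1 | h1
  · simp [min_eq_right (Real.one_le_toNNReal.2 h1)]
  rw [min_eq_left (Real.toNNReal_le_one.2 h1)]
  change 1 - ENNReal.ofReal a ≤ _
  rcases le_total a 0 with h0 | h0
  · rw [ENNReal.ofReal_of_nonpos h0, tsub_zero, ← ENNReal.ofReal_one]
    exact ENNReal.ofReal_le_ofReal (Real.one_le_exp (by linarith))
  · rw [← ENNReal.ofReal_one, ← ENNReal.ofReal_sub _ h0]
    exact ENNReal.ofReal_le_ofReal (by linarith [Real.add_one_le_exp (-a)])

theorem pi_bernoulli_forall_eq_false_le_exp (a : ι → ℝ) (T : Finset ι) :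
    Measure.pi (fun i => (PMF.bernoulli (min (a i).toNNReal 1) (min_le_right _ _)).toMeasure)
        {f | ∀ i ∈ T, f i = false} ≤ ENNReal.ofReal (Real.exp (-∑ i ∈ T, a i)) := by
  rw [pi_bernoulli_forall_eq_false, ← sum_neg_distrib, Real.exp_sum,
    ENNReal.ofReal_prod_of_nonneg fun i _ => (Real.exp_pos _).le]
  exact prod_le_prod' fun i _ => one_sub_min_toNNReal_one_le_exp_neg (a i)

end Bernoulli

theorem ofReal_exp_neg_sum_le_inv_pow {ι : Type*} (T : Finset ι) (c : ι → ℝ)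
    (hc : 1 ≤ ∑ i ∈ T, c i) {n : ℕ} (hn : 1 ≤ n) (s : ℕ) :
    ENNReal.ofReal (Real.exp (-∑ i ∈ T, 12 * c i * s * Real.log n)) ≤
      ((n : ℝ≥0∞) ^ (12 * s))⁻¹ := by
  have hn0 : (0 : ℝ) < n := by exact_mod_cast hn
  have hK : 0 ≤ 12 * s * Real.log n := by
    have := Real.log_nonneg (by exact_mod_cast hn : (1 : ℝ) ≤ n)
    positivity
  have hsum : 12 * s * Real.log n ≤ ∑ i ∈ T, 12 * c i * s * Real.log n :=
    calc 12 * s * Real.log n ≤ (∑ i ∈ T, c i) * (12 * s * Real.log n) :=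
          le_mul_of_one_le_left hK hc
      _ = ∑ i ∈ T, 12 * c i * s * Real.log n := by
          rw [sum_mul]; exact sum_congr rfl fun i _ => by ring
  calc ENNReal.ofReal (Real.exp (-∑ i ∈ T, 12 * c i * s * Real.log n))
      ≤ ENNReal.ofReal (Real.exp (-(12 * s * Real.log n))) := by gcongr
    _ = ((n : ℝ≥0∞) ^ (12 * s))⁻¹ := by
      rw [show 12 * s * Real.log n = ((12 * s : ℕ) : ℝ) * Real.log n by push_cast; ring,
        ← Real.log_pow, Real.exp_neg, Real.exp_log (by positivity),
        ENNReal.ofReal_inv_of_pos (by positivity), ENNReal.ofReal_pow hn0.le,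
        ENNReal.ofReal_natCast]

theorem two_pow_mul_inv_pow_le {n s : ℕ} (hn : 2 ≤ n) (hs : 1 ≤ s) :
    (2 : ℝ≥0∞) ^ s * ((n : ℝ≥0∞) ^ (12 * s))⁻¹ ≤ 1 / (n : ℝ≥0∞) ^ 3 := by
  have key : 2 ^ s * n ^ 3 ≤ n ^ (12 * s) :=
    calc 2 ^ s * n ^ 3 ≤ n ^ s * n ^ 3 := Nat.mul_le_mul_right _ (Nat.pow_le_pow_left hn _)
      _ = n ^ (s + 3) := (pow_add n _ _).symm
      _ ≤ n ^ (12 * s) := Nat.pow_le_pow_right (by omega) (by omega)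
  have hn0 : (n : ℝ≥0∞) ≠ 0 := by exact_mod_cast (by omega : n ≠ 0)
  rw [← div_eq_mul_inv, ENNReal.div_le_iff (pow_ne_zero _ hn0) (by simp), one_div,
    ← ENNReal.div_eq_inv_mul,
    ENNReal.le_div_iff_mul_le (.inl (pow_ne_zero _ hn0)) (.inl (by simp))]
  exact_mod_cast key

open Classical in
theorem stmt1_general {V : Type*} [Fintype V] [DecidableEq V] (n : ℕ) (hn : 2 ≤ n)
    (x y : V) (S : Finset V) (hx : x ∈ S)
    (c : Sym2 V → ℝ)
    (hcut : ∀ X : Finset V, x ∈ X → X ⊆ S.erase y →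
      1 ≤ ∑ e ∈ Finset.univ.filter
            (fun e : Sym2 V => ∃ a b : V, e = s(a, b) ∧ a ∈ X ∧ b ∈ S ∧ b ∉ X),
          c e) :
    1 - 1 / (n : ℝ≥0∞) ^ 3 ≤
      (Measure.pi fun e : Sym2 V =>
        (PMF.bernoulli (min (Real.toNNReal (12 * c e * S.card * Real.log n)) 1)
          (min_le_right _ _)).toMeasure)
        {f : Sym2 V → Bool |
          ∃ p : (SimpleGraph.fromEdgeSet {e : Sym2 V | f e = true}).Walk x y,
            ∀ v ∈ p.support, v ∈ S} := by
  set μ := Measure.pi fun e : Sym2 V =>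
    (PMF.bernoulli (min (Real.toNNReal (12 * c e * S.card * Real.log n)) 1)
      (min_le_right _ _)).toMeasure
  set E := {f : Sym2 V → Bool |
    ∃ p : (SimpleGraph.fromEdgeSet {e : Sym2 V | f e = true}).Walk x y,
      ∀ v ∈ p.support, v ∈ S}
  set cuts := (S.erase y).powerset.filter (x ∈ ·)
  have hcompl : Eᶜ ⊆ ⋃ X ∈ cuts, {f | ∀ e ∈ cutEdges S X, f e = false} := by
    intro f hf
    obtain ⟨X, hxX, hXS, hX⟩ := exists_cut_not_adj_of_no_walk_within _ hx hf
    exact Set.mem_biUnion (mem_filter.2 ⟨mem_powerset.2 hXS, hxX⟩) (forall_cutEdges_eq_false hX)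
  have hcuts : cuts.card ≤ 2 ^ S.card :=
    (card_filter_le _ _).trans <| (card_powerset _).trans_le <|
      Nat.pow_le_pow_right two_pos card_erase_le
  have hcut_le : ∀ X ∈ cuts,
      μ {f | ∀ e ∈ cutEdges S X, f e = false} ≤ ((n : ℝ≥0∞) ^ (12 * S.card))⁻¹ :=
    fun X hX => (pi_bernoulli_forall_eq_false_le_exp _ _).trans <|
      ofReal_exp_neg_sum_le_inv_pow _ _
        (hcut X (mem_filter.1 hX).2 (mem_powerset.1 (mem_filter.1 hX).1)) (by omega) _
  have hEc : μ Eᶜ ≤ 1 / (n : ℝ≥0∞) ^ 3 :=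
    calc μ Eᶜ ≤ ∑ X ∈ cuts, μ {f | ∀ e ∈ cutEdges S X, f e = false} :=
          (measure_mono hcompl).trans (measure_biUnion_finset_le _ _)
      _ ≤ cuts.card * ((n : ℝ≥0∞) ^ (12 * S.card))⁻¹ := by
          simpa using sum_le_card_nsmul _ _ _ hcut_le
      _ ≤ 2 ^ S.card * ((n : ℝ≥0∞) ^ (12 * S.card))⁻¹ := by gcongr; exact_mod_cast hcuts
      _ ≤ 1 / (n : ℝ≥0∞) ^ 3 := two_pow_mul_inv_pow_le hn (card_pos.2 ⟨x, hx⟩)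
  rw [tsub_le_iff_right]
  calc 1 = μ Set.univ := measure_univ.symm
    _ ≤ μ E + μ Eᶜ := measure_univ_le_add_compl _
    _ ≤ μ E + 1 / (n : ℝ≥0∞) ^ 3 := by gcongr

open Classical in
/-- LP rounding lemma: let `c` be edge capacities in `[0,1]` such that every cut
of `S` separating `x` from `y` has crossing capacity at least `1` (i.e. the LP
sends one unit of flow from `x` to `y` inside `S`).  If each edge `e` is chosen
independently with probability `min{12·c_e·|S|·ln n, 1}`, then with probability
at least `1 - 1/n³` the chosen edges contain an `x`–`y` path all of whose
vertices lie in `S`. -/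
theorem stmt1 {V : Type*} [Fintype V] [DecidableEq V] (n : ℕ) (hn : 2 ≤ n)
    (hcard : Fintype.card V = n)
    (x y : V) (hxy : x ≠ y) (S : Finset V) (hx : x ∈ S) (hy : y ∈ S)
    (c : Sym2 V → ℝ) (hc0 : ∀ e, 0 ≤ c e) (hc1 : ∀ e, c e ≤ 1)
    (hcut : ∀ X : Finset V, x ∈ X → X ⊆ S.erase y →
      1 ≤ ∑ e ∈ Finset.univ.filter
            (fun e : Sym2 V => ∃ a b : V, e = s(a, b) ∧ a ∈ X ∧ b ∈ S ∧ b ∉ X),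
          c e) :
    1 - 1 / (n : ℝ≥0∞) ^ 3 ≤
      (Measure.pi fun e : Sym2 V =>
        (PMF.bernoulli (min (Real.toNNReal (12 * c e * S.card * Real.log n)) 1)
          (min_le_right _ _)).toMeasure)
        {f : Sym2 V → Bool |
          ∃ p : (SimpleGraph.fromEdgeSet {e : Sym2 V | f e = true}).Walk x y,
            ∀ v ∈ p.support, v ∈ S} :=
  stmt1_general n hn x y S hx c hcut
end

section
/- Let V be a finite set with safe sets S(u,v) ⊆ V satisfying u, v ∈ S(u,v) for all pairs, let t ≥ 1, and let D = {(u,v) : |S(u,v)| ≤ t}. For (u,v) ∈ D and S' with u ∈ S' ⊂ S(u,v), v ∉ S', let δ_uv(S') be the set of unordered pairs of vertices with one endpoint in S' and the other in S(u,v) \ S'. Suppose y assigns a nonnegative real to each such ((u,v), S') so that for every unordered pair e of vertices, the sum of y over all (u,v) ∈ D with both endpoints of e in S(u,v) and all S' with e ∈ δ_uv(S') is at most 1 (dual feasibility). Let H be a set of edges each of which has its dual constraint tight (the above sum equals 1), and let F be any set of edges such that every (u,v) ∈ D is joined by a u–v path using edges of F with all vertices in S(u,v). Then |H| ≤ t²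 · |F|. -/
open Classical in
/-- The left-hand side of the dual constraint corresponding to the edge `e`:
the sum of `y (u,v) S'` over all demands `(u,v)` with `|S(u,v)| ≤ t` and both
endpoints of `e` in `S(u,v)`, and all cuts `S'` with `u ∈ S' ⊂ S(u,v)`, `v ∉ S'`,
such that `e` crosses the cut (one endpoint in `S'`, the other in `S(u,v) \ S'`). -/
noncomputable def dualSum {V : Type*} [Fintype V] [DecidableEq V]
    (S : V → V → Finset V) (t : ℕ) (y : V → V → Finset V → ℝ) (e : Sym2 V) : ℝ :=
  ∑ u : V, ∑ v : V, ∑ S' ∈ (S u v).powerset,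
    if (S u v).card ≤ t ∧ (∀ w ∈ e, w ∈ S u v) ∧ u ∈ S' ∧ v ∉ S' ∧
        (∃ a b : V, e = s(a, b) ∧ a ∈ S' ∧ b ∈ S u v ∧ b ∉ S')
    then y u v S' else 0

/-!
Expand both `∑_{e ∈ H} dualSum e` and `∑_{f ∈ F} dualSum f` as sums over the dual variables
`y (u,v) S'`. Tightness makes the first equal to `|H|`, feasibility bounds the second by `|F|`.
For a fixed cut `S'` of a demand `(u,v)`, the edges of `H` it counts lie inside `S(u,v)`, so
there are at most `|S(u,v)|² ≤ t²` of them, while the safe `u-v` path in `F` leaves `S'` and so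
contributes at least one edge of `F` to the same cut. Comparing coefficient by coefficient gives
`|H| ≤ t² |F|`.
-/

open Finset

section
open scoped Classical

variable {V : Type*}

lemma card_filter_forall_mem_le_sq (E : Finset (Sym2 V)) (T : Finset V) :
    #(E.filter fun e => ∀ w ∈ e, w ∈ T) ≤ #T ^ 2 := by
  calc #(E.filter fun e => ∀ w ∈ e, w ∈ T)
      ≤ #T.sym2 := card_le_card fun e he => mem_sym2_iff.2 (mem_filter.1 he).2
    _ = (#T + 1).choose 2 := card_sym2 T
    _ ≤ #T ^ 2 := by
      rw [Nat.choose_two_right, Nat.add_sub_cancel]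
      exact Nat.div_le_of_le_mul (by nlinarith)

/-- The condition under which `y u v S'` enters the dual constraint of the edge `e`. -/
def CrossesSafeCut (S : V → V → Finset V) (t : ℕ) (u v : V) (S' : Finset V) (e : Sym2 V) :
    Prop :=
  (S u v).card ≤ t ∧ (∀ w ∈ e, w ∈ S u v) ∧ u ∈ S' ∧ v ∉ S' ∧
    (∃ a b : V, e = s(a, b) ∧ a ∈ S' ∧ b ∈ S u v ∧ b ∉ S')

variable {S : V → V → Finset V} {t : ℕ}

lemma exists_mem_crossesSafeCut_of_walk {F : Finset (Sym2 V)} {u v : V} {S' : Finset V}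
    (p : (SimpleGraph.fromEdgeSet ↑F).Walk u v) (hp : ∀ w ∈ p.support, w ∈ S u v)
    (hcard : (S u v).card ≤ t) (hu : u ∈ S') (hv : v ∉ S') :
    ∃ f ∈ F, CrossesSafeCut S t u v S' f := by
  obtain ⟨d, hd, hfst, hsnd⟩ := p.exists_boundary_dart (S' : Set V) hu hv
  have hfstS := hp _ (p.dart_fst_mem_support_of_mem_darts hd)
  have hsndS := hp _ (p.dart_snd_mem_support_of_mem_darts hd)
  refine ⟨s(d.fst, d.snd), ((SimpleGraph.fromEdgeSet_adj _).1 d.adj).1, hcard, ?_, hu, hv,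
    d.fst, d.snd, rfl, hfst, hsndS, hsnd⟩
  rintro w hw
  rcases Sym2.mem_iff.1 hw with rfl | rfl <;> assumption

lemma card_filter_crossesSafeCut_le (H F : Finset (Sym2 V)) (u v : V)
    (S' : Finset V)
    (hF : (S u v).card ≤ t →
      ∃ p : (SimpleGraph.fromEdgeSet ↑F).Walk u v, ∀ w ∈ p.support, w ∈ S u v) :
    #(H.filter (CrossesSafeCut S t u v S')) ≤ t ^ 2 * #(F.filter (CrossesSafeCut S t u v S')) := by
  rcases (H.filter (CrossesSafeCut S t u v S')).eq_empty_or_nonempty with hH | ⟨e, he⟩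
  · simp [hH]
  obtain ⟨hcard, -, hu, hv, -⟩ := (mem_filter.1 he).2
  obtain ⟨p, hp⟩ := hF hcard
  obtain ⟨f, hfF, hf⟩ := exists_mem_crossesSafeCut_of_walk p hp hcard hu hv
  have hF_card : 1 ≤ #(F.filter (CrossesSafeCut S t u v S')) :=
    card_pos.2 ⟨f, mem_filter.2 ⟨hfF, hf⟩⟩
  calc #(H.filter (CrossesSafeCut S t u v S'))
      ≤ #(H.filter fun e => ∀ w ∈ e, w ∈ S u v) :=
        card_le_card <| monotone_filter_right _ fun _ _ he => he.2.1
    _ ≤ #(S u v) ^ 2 := card_filter_forall_mem_le_sq H (S u v)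
    _ ≤ t ^ 2 := Nat.pow_le_pow_left hcard 2
    _ ≤ t ^ 2 * #(F.filter (CrossesSafeCut S t u v S')) := Nat.le_mul_of_pos_right _ hF_card

lemma dualSum_eq [Fintype V] [DecidableEq V] (y : V → V → Finset V → ℝ) (e : Sym2 V) :
    dualSum S t y e = ∑ u : V, ∑ v : V, ∑ S' ∈ (S u v).powerset,
      if CrossesSafeCut S t u v S' e then y u v S' else 0 := by
  unfold dualSum CrossesSafeCut
  -- the two sides differ only in the `Decidable` instances of the `if`s
  congr!

lemma sum_dualSum_eq [Fintype V] [DecidableEq V] (y : V → V → Finset V → ℝ)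
    (E : Finset (Sym2 V)) :
    ∑ e ∈ E, dualSum S t y e = ∑ u : V, ∑ v : V, ∑ S' ∈ (S u v).powerset,
      (#(E.filter (CrossesSafeCut S t u v S')) : ℝ) * y u v S' := by
  simp only [dualSum_eq]
  rw [sum_comm]
  refine sum_congr rfl fun u _ => ?_
  rw [sum_comm]
  refine sum_congr rfl fun v _ => ?_
  rw [sum_comm]
  refine sum_congr rfl fun S' _ => ?_
  rw [← sum_filter, sum_const, nsmul_eq_mul]

end

theorem stmt4_general {V : Type*} [Fintype V] [DecidableEq V]
    (S : V → V → Finset V)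
    (t : ℕ)
    (y : V → V → Finset V → ℝ) (hy : ∀ u v S', 0 ≤ y u v S')
    (hfeas : ∀ e : Sym2 V, dualSum S t y e ≤ 1)
    (H : Finset (Sym2 V)) (hH : ∀ e ∈ H, dualSum S t y e = 1)
    (F : Finset (Sym2 V))
    (hF : ∀ u v : V, (S u v).card ≤ t →
      ∃ p : (SimpleGraph.fromEdgeSet ↑F).Walk u v, ∀ w ∈ p.support, w ∈ S u v) :
    (H.card : ℝ) ≤ (t : ℝ) ^ 2 * F.card := by
  classical
  calc (H.card : ℝ) = ∑ e ∈ H, dualSum S t y e := by simp [sum_congr rfl hH]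
    _ = ∑ u : V, ∑ v : V, ∑ S' ∈ (S u v).powerset,
          (#(H.filter (CrossesSafeCut S t u v S')) : ℝ) * y u v S' := sum_dualSum_eq y H
    _ ≤ ∑ u : V, ∑ v : V, ∑ S' ∈ (S u v).powerset,
          (t : ℝ) ^ 2 * ((#(F.filter (CrossesSafeCut S t u v S')) : ℝ) * y u v S') := by
        refine sum_le_sum fun u _ => sum_le_sum fun v _ => sum_le_sum fun S' _ => ?_
        rw [← mul_assoc]
        gcongr
        · exact hy u v S'
        · exact_mod_cast card_filter_crossesSafeCut_le H F u v S' (hF u v)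
    _ = (t : ℝ) ^ 2 * ∑ f ∈ F, dualSum S t y f := by simp only [sum_dualSum_eq, mul_sum]
    _ ≤ (t : ℝ) ^ 2 * F.card := by
        gcongr
        simpa using sum_le_sum fun f (_ : f ∈ F) => hfeas f

/-- The core counting argument of the primal–dual algorithm for Constrained
Connectivity-Sum: if `y` is a feasible dual solution, `H` is a set of edges all
of whose dual constraints are tight, and `F` is any edge set giving every demand
`(u,v)` with `|S(u,v)| ≤ t` a safe `u-v` path, then `|H| ≤ t² · |F|`. -/
theorem stmt4 {V : Type*} [Fintype V] [DecidableEq V]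
    (S : V → V → Finset V) (hS : ∀ u v, u ∈ S u v ∧ v ∈ S u v)
    (t : ℕ) (ht : 1 ≤ t)
    (y : V → V → Finset V → ℝ) (hy : ∀ u v S', 0 ≤ y u v S')
    (hfeas : ∀ e : Sym2 V, dualSum S t y e ≤ 1)
    (H : Finset (Sym2 V)) (hH : ∀ e ∈ H, dualSum S t y e = 1)
    (F : Finset (Sym2 V))
    (hF : ∀ u v : V, (S u v).card ≤ t →
      ∃ p : (SimpleGraph.fromEdgeSet ↑F).Walk u v, ∀ w ∈ p.support, w ∈ S u v) :
    (H.card : ℝ) ≤ (t : ℝ) ^ 2 * F.card :=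
  stmt4_general S t y hy hfeas H hH F hF
end

section
/- For every constant ε with 0 < ε < 1/3 and all sufficiently large n, setting k = ⌈n^{2(1+ε)/(1−3ε)}⌉, there exists an assignment of a bijection π_{uv} : [k] → [k] to every unordered pair {u,v} of distinct elements of [n] (with a fixed orientation of each pair) such that every labeling L : [n] → (subsets of [k]) with the property that for every pair {u,v} there is some a ∈ L(u) with π_{uv}(a) ∈ L(v), satisfies Σ_{u ∈ [n]} |L(u)| > ε·n². -/
/-!
Choose the permutations `π u v` independently and uniformly at random. A fixed multi-labeling
`L` satisfies the pair `u < v` with probability at most `|L u| |L v| / k`, independently over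
the pairs; since `x ≤ n e^{x/n}`, `L` is valid with probability at most
`(n² / k)^(n choose 2) · e^{2M}` when `∑ |L u| ≤ M`. There are at most `(M + 1)^n k^M` such
labelings, and for `M = ⌊ε n²⌋` and `k ≥ n^{2(1+ε)/(1-3ε)}` the union bound over them is below
`1` as soon as `n ≥ max 3 ε⁻²`: the exponent of `k` is chosen so that the `n² log n` terms of
its logarithm cancel down to `-2ε (1 - ε) n² log n / (1 - 3ε)`.
-/

open Finset

section Perm

variable {α : Type*} [Fintype α] [DecidableEq α]

theorem card_perm_apply_eq_mul_card (a b : α) :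
    #{σ : Equiv.Perm α | σ a = b} * Fintype.card α = (Fintype.card α).factorial := by
  have fiber_eq (c : α) : #{σ : Equiv.Perm α | σ a = c} = #{σ : Equiv.Perm α | σ a = b} :=
    card_nbij' (Equiv.swap c b * ·) (Equiv.swap c b * ·)
      (fun σ hσ => by simp_all) (fun σ hσ => by simp_all)
      (fun σ _ => by simp [← mul_assoc]) (fun σ _ => by simp [← mul_assoc])
  calc _ = ∑ c : α, #{σ : Equiv.Perm α | σ a = c} := by simp [fiber_eq, mul_comm]
    _ = _ := by
      rw [← card_eq_sum_card_fiberwise fun σ _ => mem_univ (σ a)]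
      simp [Fintype.card_perm]

theorem card_perm_exists_mem_apply_mem_mul_card_le (A B : Finset α) :
    #{σ : Equiv.Perm α | ∃ a ∈ A, σ a ∈ B} * Fintype.card α
      ≤ #A * #B * (Fintype.card α).factorial := by
  have cover : ({σ : Equiv.Perm α | ∃ a ∈ A, σ a ∈ B} : Finset _)
      ⊆ A.biUnion fun a => B.biUnion fun b => {σ : Equiv.Perm α | σ a = b} := by
    intro σ
    simp
  calc _ ≤ (∑ a ∈ A, ∑ b ∈ B, #{σ : Equiv.Perm α | σ a = b}) * Fintype.card α := by
        gcongr
        exact (card_le_card cover).trans <| card_biUnion_le.trans <|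
          sum_le_sum fun _ _ => card_biUnion_le
    _ = #A * #B * (Fintype.card α).factorial := by
        simp [sum_mul, card_perm_apply_eq_mul_card, mul_assoc]

end Perm

theorem le_mul_exp_div {x t : ℝ} (ht : 0 < t) : x ≤ t * Real.exp (x / t) := by
  rw [← div_le_iff₀' ht]
  linarith [Real.add_one_le_exp (x / t)]

theorem prod_lt_pairs_le {V : Type*} [Fintype V] [LinearOrder V] [Nonempty V] {a : V → ℝ}
    (ha : ∀ u, 0 ≤ a u) {k : ℝ} (hk : 0 < k) :
    ∏ p ∈ {p : V × V | p.1 < p.2}, (a p.1 * a p.2 / k)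
      ≤ ((Fintype.card V : ℝ) ^ 2 / k) ^ (Fintype.card V).choose 2
        * Real.exp (2 * ∑ u, a u) := by
  set n : ℝ := (Fintype.card V : ℝ)
  have hn : 0 < n := Nat.cast_pos.2 Fintype.card_pos
  have pair_le (u v : V) : a u * a v / k ≤ n ^ 2 / k * Real.exp ((a u + a v) / n) := by
    rw [add_div, Real.exp_add, div_mul_eq_mul_div, div_le_div_iff_of_pos_right hk]
    calc a u * a v ≤ (n * Real.exp (a u / n)) * (n * Real.exp (a v / n)) := by
          gcongr
          · exact ha _
          · exact le_mul_exp_div hn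
          · exact le_mul_exp_div hn
      _ = _ := by ring
  have sum_le : ∑ p ∈ {p : V × V | p.1 < p.2}, (a p.1 + a p.2) / n ≤ 2 * ∑ u, a u :=
    calc _ ≤ ∑ p : V × V, (a p.1 + a p.2) / n :=
          sum_le_sum_of_subset_of_nonneg (filter_subset _ _) fun p _ _ => by
            have := ha p.1; have := ha p.2; positivity
      _ = 2 * ∑ u, a u := by
          rw [← sum_div, Fintype.sum_prod_type]
          simp only [sum_add_distrib, sum_const, card_univ, nsmul_eq_mul, ← mul_sum]
          field_simp
          ring
  calc _ ≤ ∏ p ∈ {p : V × V | p.1 < p.2}, (n ^ 2 / k * Real.exp ((a p.1 + a p.2) / n)) :=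
        prod_le_prod (fun p _ => by have := ha p.1; have := ha p.2; positivity)
          fun p _ => pair_le p.1 p.2
    _ = (n ^ 2 / k) ^ (Fintype.card V).choose 2
          * Real.exp (∑ p ∈ {p : V × V | p.1 < p.2}, (a p.1 + a p.2) / n) := by
        rw [prod_mul_distrib, prod_const, Fintype.card_product_filter_lt, Real.exp_sum]
    _ ≤ _ := by gcongr

theorem card_labelings_le {V α : Type*} [Fintype V] [DecidableEq V] [Fintype α] [Nonempty α]
    (M : ℕ) :
    #{L : V → Finset α | ∑ u, #(L u) ≤ M}
      ≤ (M + 1) ^ Fintype.card V * Fintype.card α ^ M := by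
  set S : Finset (V → Finset α) := {L | ∑ u, #(L u) ≤ M}
  have fiber_le : ∀ c ∈ S.image (fun L u => #(L u)), #{L ∈ S | (fun u => #(L u)) = c}
      ≤ Fintype.card α ^ M := by
    simp only [mem_image]
    rintro _ ⟨L₀, hL₀, rfl⟩
    calc _ ≤ #(Fintype.piFinset fun u => powersetCard #(L₀ u) (univ : Finset α)) := by
          refine card_le_card fun L hL => ?_
          simp only [mem_filter, funext_iff] at hL
          simp [Fintype.mem_piFinset, hL.2]
      _ = ∏ u, (Fintype.card α).choose #(L₀ u) := by simp
      _ ≤ ∏ u, Fintype.card α ^ #(L₀ u) := prod_le_prod' fun u _ => Nat.choose_le_pow _ _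
      _ = Fintype.card α ^ ∑ u, #(L₀ u) := prod_pow_eq_pow_sum _ _ _
      _ ≤ Fintype.card α ^ M := Nat.pow_le_pow_right Fintype.card_pos (by simpa [S] using hL₀)
  have image_sub : S.image (fun L u => #(L u)) ⊆ Fintype.piFinset fun _ => range (M + 1) := by
    simp only [subset_iff, mem_image, Fintype.mem_piFinset, mem_range]
    rintro _ ⟨L, hL, rfl⟩ u
    dsimp only
    have : #(L u) ≤ ∑ v, #(L v) :=
      single_le_sum (f := fun v => #(L v)) (fun _ _ => Nat.zero_le _) (mem_univ u)
    simp only [S, mem_filter] at hL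
    omega
  calc #S ≤ Fintype.card α ^ M * #(S.image fun L u => #(L u)) :=
        card_le_mul_card_image _ _ fiber_le
    _ ≤ Fintype.card α ^ M * (M + 1) ^ Fintype.card V := by
        gcongr
        exact (card_le_card image_sub).trans_eq (by simp)
    _ = _ := mul_comm _ _

namespace UniqueGames

def Satisfies {V α : Type*} [LT V] (π : V → V → Equiv.Perm α) (L : V → Finset α) : Prop :=
  ∀ u v, u < v → ∃ a ∈ L u, π u v a ∈ L v

variable {V α : Type*} [Fintype V] [LinearOrder V] [DecidableEq α]

instance (L : V → Finset α) :
    DecidablePred fun π : V → V → Equiv.Perm α => Satisfies π L :=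
  fun π => inferInstanceAs (Decidable (∀ u v, u < v → ∃ a ∈ L u, π u v a ∈ L v))

variable [Fintype α] [Nonempty α]

theorem card_satisfies_le (L : V → Finset α) :
    (#{π | Satisfies π L} : ℝ) ≤ Fintype.card (V → V → Equiv.Perm α) *
      ∏ p ∈ {p : V × V | p.1 < p.2}, (#(L p.1) * #(L p.2) / Fintype.card α : ℝ) := by
  set k := Fintype.card α
  have hk : (0 : ℝ) < k := by exact_mod_cast Fintype.card_pos
  have h_pi : ({π | Satisfies π L} : Finset (V → V → Equiv.Perm α))
      = Fintype.piFinset fun u => Fintype.piFinset fun v =>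
          {σ : Equiv.Perm α | u < v → ∃ a ∈ L u, σ a ∈ L v} := by
    ext π
    simp only [mem_filter, mem_univ, true_and, Fintype.mem_piFinset]
    rfl
  have h_card : Fintype.card (V → V → Equiv.Perm α) = ∏ _u : V, ∏ _v : V, k.factorial := by
    simp [Fintype.card_perm, k]
  rw [h_pi, h_card, prod_filter, Fintype.prod_prod_type]
  simp only [Fintype.card_piFinset]
  push_cast
  rw [← prod_mul_distrib]
  refine prod_le_prod (fun u _ => prod_nonneg fun v _ => Nat.cast_nonneg _) fun u _ => ?_
  rw [← prod_mul_distrib]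
  refine prod_le_prod (fun v _ => Nat.cast_nonneg _) fun v _ => ?_
  split_ifs with huv
  · simp only [huv, true_imp_iff]
    rw [mul_div_assoc', le_div_iff₀ hk]
    exact_mod_cast (card_perm_exists_mem_apply_mem_mul_card_le (L u) (L v)).trans_eq (by ring)
  · simp [huv, Fintype.card_perm, k]

theorem exists_forall_satisfies_lt_of_lt_one [Nonempty V] (M : ℕ)
    (h : ((M + 1) ^ Fintype.card V * Fintype.card α ^ M : ℝ)
      * ((Fintype.card V : ℝ) ^ 2 / Fintype.card α) ^ (Fintype.card V).choose 2
      * Real.exp (2 * M) < 1) :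
    ∃ π : V → V → Equiv.Perm α, ∀ L, Satisfies π L → M < ∑ u, #(L u) := by
  by_contra! hbad
  set labelings : Finset (V → Finset α) := {L | ∑ u, #(L u) ≤ M}
  set bound : ℝ := ((Fintype.card V : ℝ) ^ 2 / Fintype.card α) ^ (Fintype.card V).choose 2
      * Real.exp (2 * M)
  have cover : univ ⊆ labelings.biUnion fun L => {π | Satisfies π L} := fun π _ => by
    obtain ⟨L, hL, hLM⟩ := hbad π
    simp only [mem_biUnion, mem_filter, mem_univ, true_and, labelings]
    exact ⟨L, hLM, hL⟩
  have h_sat (L) (hL : L ∈ labelings) :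
      (#{π | Satisfies π L} : ℝ) ≤ Fintype.card (V → V → Equiv.Perm α) * bound := by
    refine (card_satisfies_le L).trans (mul_le_mul_of_nonneg_left ?_ (Nat.cast_nonneg _))
    refine (prod_lt_pairs_le (fun u => Nat.cast_nonneg #(L u))
      (Nat.cast_pos.2 Fintype.card_pos)).trans ?_
    simp only [bound]
    gcongr
    exact_mod_cast (mem_filter.1 hL).2
  have : (Fintype.card (V → V → Equiv.Perm α) : ℝ)
      ≤ Fintype.card (V → V → Equiv.Perm α)
        * ((M + 1) ^ Fintype.card V * Fintype.card α ^ M * bound) :=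
    calc (Fintype.card (V → V → Equiv.Perm α) : ℝ)
        ≤ ∑ L ∈ labelings, (#{π | Satisfies π L} : ℝ) := by
          exact_mod_cast (card_le_card cover).trans card_biUnion_le
      _ ≤ #labelings * (Fintype.card (V → V → Equiv.Perm α) * bound) := by
          simpa using sum_le_sum h_sat
      _ ≤ _ := by
          rw [mul_left_comm]
          gcongr
          exact_mod_cast card_labelings_le M
  rw [le_mul_iff_one_le_right (Nat.cast_pos.2 Fintype.card_pos)] at this
  simp only [bound, ← mul_assoc] at this
  linarith

theorem union_bound_lt_one {ε : ℝ} (hε0 : 0 < ε) (hε : ε < 1 / 3) {n k M : ℕ}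
    (hn : 3 ≤ n) (hεn : 1 ≤ ε ^ 2 * n) (hk : (n : ℝ) ^ (2 * (1 + ε) / (1 - 3 * ε)) ≤ k)
    (hM : (M : ℝ) ≤ ε * n ^ 2) :
    ((M + 1) ^ n * k ^ M : ℝ) * ((n : ℝ) ^ 2 / k) ^ n.choose 2 * Real.exp (2 * M) < 1 := by
  set x : ℝ := (n : ℝ)
  set θ := 2 * (1 + ε) / (1 - 3 * ε)
  have hx : 3 ≤ x := Nat.ofNat_le_cast.2 hn
  have hD : 0 < 1 - 3 * ε := by linarith
  have hθ : 0 < θ := by positivity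
  have hℓ : 1 ≤ Real.log x := by
    rw [Real.le_log_iff_exp_le (by positivity)]
    linarith [Real.exp_one_lt_d9]
  have hk0 : 0 < (k : ℝ) := (Real.rpow_pos_of_pos (by positivity) θ).trans_le hk
  have hlogk : θ * Real.log x ≤ Real.log k := by
    rw [← Real.log_rpow (by positivity)]
    exact Real.log_le_log (by positivity) hk
  have hlogM : Real.log (M + 1) ≤ 2 * Real.log x := by
    calc Real.log (M + 1) ≤ Real.log (x ^ 2) := Real.log_le_log (by positivity) (by nlinarith)
      _ = 2 * Real.log x := by rw [Real.log_pow]; norm_num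
  set Z : ℝ := x * (x - 1) / 2
  have hZ : (n.choose 2 : ℝ) = Z := Nat.cast_choose_two ℝ n
  have hZM : 0 ≤ Z - ε * x ^ 2 := by
    simp only [Z]
    nlinarith [mul_nonneg (by linarith : (0 : ℝ) ≤ x) (by linarith : (0 : ℝ) ≤ x - 3)]
  rw [← Real.log_neg_iff (by positivity), Real.log_mul (by positivity) (by positivity),
    Real.log_mul (by positivity) (by positivity), Real.log_mul (by positivity) (by positivity),
    Real.log_pow, Real.log_pow, Real.log_pow, Real.log_div (by positivity) hk0.ne', Real.log_pow,
    Real.log_exp, hZ]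
  calc _ ≤ 2 * x * Real.log x + x * (x - 1) * Real.log x + 2 * ε * x ^ 2
        - (Z - ε * x ^ 2) * (θ * Real.log x) := by
        have h1 : (Z - M) * (θ * Real.log x) ≤ (Z - M) * Real.log k :=
          mul_le_mul_of_nonneg_left hlogk (by linarith)
        have h2 : (Z - ε * x ^ 2) * (θ * Real.log x) ≤ (Z - M) * (θ * Real.log x) :=
          mul_le_mul_of_nonneg_right (by linarith) (by positivity)
        have h3 : x * Real.log (M + 1) ≤ x * (2 * Real.log x) :=
          mul_le_mul_of_nonneg_left hlogM (by positivity)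
        simp only [Z] at *
        push_cast
        linarith
    _ < 0 := by
        -- Clearing the denominator of `θ`; the bracket is negative since `ε² x ≥ 1 ≤ log x`.
        have key : (1 - 3 * ε) * (2 * x * Real.log x + x * (x - 1) * Real.log x + 2 * ε * x ^ 2
            - (Z - ε * x ^ 2) * (θ * Real.log x)) = 2 * x * (-2 * ε ^ 2 * x * Real.log x
              + (1 - ε) * Real.log x + ε * (1 - 3 * ε) * x * (1 - Real.log x)) := by
          simp only [Z, θ]
          field_simp
          ring
        have bracket_neg : -2 * ε ^ 2 * x * Real.log x + (1 - ε) * Real.log x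
            + ε * (1 - 3 * ε) * x * (1 - Real.log x) < 0 := by
          nlinarith [mul_nonneg (mul_nonneg hε0.le hD.le) (by linarith : (0 : ℝ) ≤ x)]
        refine neg_of_mul_neg_right (a := 1 - 3 * ε) ?_ hD.le
        rw [key]
        exact mul_neg_of_pos_of_neg (by positivity) bracket_neg

end UniqueGames

/-- There exist hard instances of Unique Games for the multi-labeling
(Min-Rep style) objective: for every `0 < ε < 1/3` and all sufficiently large
`n`, with alphabet size `k = ⌈n^{2(1+ε)/(1-3ε)}⌉` there is an assignment of a
permutation `π u v` of the alphabet to every (oriented) pair `u < v` of vertices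
of `K_n` such that every multi-labeling `L` satisfying all pairs — that is, for
every `u < v` some `a ∈ L u` has `π u v a ∈ L v` — uses more than `ε·n²` labels
in total. -/
theorem stmt9 (ε : ℝ) (hε0 : 0 < ε) (hε : ε < 1 / 3) :
    ∃ N : ℕ, ∀ n : ℕ, N ≤ n →
      ∀ k : ℕ, k = ⌈(n : ℝ) ^ (2 * (1 + ε) / (1 - 3 * ε))⌉₊ →
        ∃ π : Fin n → Fin n → Equiv.Perm (Fin k),
          ∀ L : Fin n → Finset (Fin k),
            (∀ u v : Fin n, u < v → ∃ a ∈ L u, π u v a ∈ L v) →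
            ε * (n : ℝ) ^ 2 < ∑ u : Fin n, ((L u).card : ℝ) := by
  refine ⟨max 3 ⌈1 / ε ^ 2⌉₊, fun n hn k hk => ?_⟩
  have hn3 : 3 ≤ n := le_of_max_le_left hn
  have hεn : 1 ≤ ε ^ 2 * n := by
    have := Nat.ceil_le.1 (le_of_max_le_right hn)
    rwa [div_le_iff₀' (by positivity)] at this
  have hk' : (n : ℝ) ^ (2 * (1 + ε) / (1 - 3 * ε)) ≤ k := hk ▸ Nat.le_ceil _
  have hk0 : 0 < k := Nat.cast_pos.1 <|
    (Real.rpow_pos_of_pos (Nat.cast_pos.2 (by omega)) _).trans_le hk'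
  have : NeZero n := ⟨by omega⟩
  have : NeZero k := ⟨hk0.ne'⟩
  have hM : (⌊ε * n ^ 2⌋₊ : ℝ) ≤ ε * n ^ 2 := Nat.floor_le (by positivity)
  obtain ⟨π, hπ⟩ := UniqueGames.exists_forall_satisfies_lt_of_lt_one (V := Fin n) (α := Fin k)
    ⌊ε * n ^ 2⌋₊ (by simpa using UniqueGames.union_bound_lt_one hε0 hε hn3 hεn hk' hM)
  refine ⟨π, fun L hL => ?_⟩
  calc ε * (n : ℝ) ^ 2 < ⌊ε * (n : ℝ) ^ 2⌋₊ + 1 := Nat.lt_floor_add_one _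
    _ ≤ ∑ u, ((L u).card : ℝ) := by exact_mod_cast hπ L hL
end

section
/- Let V be a finite set with a symmetric hierarchical safe-set family, and let G be a graph on V that contains, for every hard pair {x,y}, an x–y path all of whose vertices lie in S(x,y). Then for every pair {x,y} (easy or hard) G contains an x–y path all of whose vertices lie in S(x,y); that is, G is a feasible solution. -/
/-- There is a path from `x` to `y` in the graph with edge set `E`
all of whose vertices lie in `S`. -/
def SafeWalk {V : Type*} (E : Set (Sym2 V)) (S : Set V) (x y : V) : Prop :=
  ∃ p : (SimpleGraph.fromEdgeSet E).Walk x y, ∀ v ∈ p.support, v ∈ S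

/-- The pair `{x,y}` is easy: some `z ∈ S(x,y)` has both `S(x,z)` and `S(y,z)`
strictly contained in `S(x,y)`. A pair is hard if it is not easy. -/
def Easy {V : Type*} [DecidableEq V] (S : V → V → Finset V) (x y : V) : Prop :=
  ∃ z ∈ S x y, S x z ⊂ S x y ∧ S y z ⊂ S x y

/-
An easy pair `{x,y}` with witness `z` splits into the pairs `{x,z}` and `{y,z}`, whose safe sets
are strictly smaller subsets of `S(x,y)`; gluing their safe paths at `z` gives a safe `x`–`y` path.
Strong induction on `|S(x,y)|` therefore reduces every pair to hard pairs.
-/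

namespace SafeWalk

variable {V : Type*} {E : Set (Sym2 V)} {S T : Set V} {x y z : V}

theorem mono (h : SafeWalk E S x y) (hST : S ⊆ T) : SafeWalk E T x y :=
  let ⟨p, hp⟩ := h
  ⟨p, fun v hv => hST (hp v hv)⟩

theorem symm (h : SafeWalk E S x y) : SafeWalk E S y x :=
  let ⟨p, hp⟩ := h
  ⟨p.reverse, fun v hv => hp v (List.mem_reverse.mp (p.support_reverse ▸ hv))⟩

theorem trans (hxy : SafeWalk E S x y) (hyz : SafeWalk E S y z) : SafeWalk E S x z :=
  let ⟨p, hp⟩ := hxy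
  let ⟨q, hq⟩ := hyz
  ⟨p.append q, fun v hv => (p.mem_support_append_iff q).mp hv |>.elim (hp v) (hq v)⟩

end SafeWalk

theorem stmt14_general {V : Type*} [DecidableEq V] (S : V → V → Finset V)
    (G : Set (Sym2 V))
    (hhard : ∀ x y, ¬ Easy S x y → SafeWalk G ↑(S x y) x y) :
    ∀ x y, SafeWalk G ↑(S x y) x y := by
  intro x y
  induction hn : (S x y).card using Nat.strong_induction_on generalizing x y with
  | _ n ih =>
    by_cases he : Easy S x y
    · obtain ⟨z, -, hxz, hyz⟩ := he
      have hxz' : SafeWalk G ↑(S x z) x z := ih _ (hn ▸ Finset.card_lt_card hxz) x z rfl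
      have hyz' : SafeWalk G ↑(S y z) y z := ih _ (hn ▸ Finset.card_lt_card hyz) y z rfl
      exact (hxz'.mono (Finset.coe_subset.mpr hxz.subset)).trans
        (hyz'.mono (Finset.coe_subset.mpr hyz.subset)).symm
    · exact hhard x y he

/-- If a graph `G` has, for every hard pair, a safe path, then it has a safe
path for every pair, i.e. `G` is feasible. -/
theorem stmt14 {V : Type*} [Fintype V] [DecidableEq V] (S : V → V → Finset V)
    (hmem : ∀ x y, x ∈ S x y ∧ y ∈ S x y)
    (hsymm : ∀ x y, S x y = S y x)
    (hhier : ∀ x y z, z ∈ S x y → S x z ⊆ S x y ∧ S z y ⊆ S x y)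
    (G : Set (Sym2 V))
    (hhard : ∀ x y, ¬ Easy S x y → SafeWalk G ↑(S x y) x y) :
    ∀ x y, SafeWalk G ↑(S x y) x y :=
  stmt14_general S G hhard
end

section
/- Let V be a finite set with a symmetric hierarchical safe-set family and let {x,y} be a hard pair. Then S(u,v) ⊆ S(x,y) for all u, v ∈ S(x,y). -/
/-! A hard pair `{x,y}` is split by no `u ∈ S(x,y)`: one of `S(x,u)`, `S(u,y)` is all of
`S(x,y)`, and hierarchy applied inside that set bounds `S(u,v)` for every `v ∈ S(x,y)`. -/

theorem Easy.of_ssubset {V : Type*} [DecidableEq V] {S : V → V → Finset V}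
    (hsymm : ∀ x y, S x y = S y x) {x y u : V} (hu : u ∈ S x y)
    (hxu : S x u ⊂ S x y) (huy : S u y ⊂ S x y) : Easy S x y :=
  ⟨u, hu, hxu, hsymm y u ▸ huy⟩

theorem eq_or_eq_of_not_easy {V : Type*} [DecidableEq V] {S : V → V → Finset V}
    (hsymm : ∀ x y, S x y = S y x)
    (hhier : ∀ x y z, z ∈ S x y → S x z ⊆ S x y ∧ S z y ⊆ S x y)
    {x y u : V} (hhard : ¬ Easy S x y) (hu : u ∈ S x y) :
    S x u = S x y ∨ S u y = S x y := by
  obtain ⟨hxu, huy⟩ := hhier x y u hu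
  by_contra! hne
  exact hhard (Easy.of_ssubset hsymm hu (hxu.ssubset_of_ne hne.1) (huy.ssubset_of_ne hne.2))

theorem stmt15_general {V : Type*} [DecidableEq V] (S : V → V → Finset V)
    (hsymm : ∀ x y, S x y = S y x)
    (hhier : ∀ x y z, z ∈ S x y → S x z ⊆ S x y ∧ S z y ⊆ S x y)
    (x y : V) (hhard : ¬ Easy S x y) :
    ∀ u ∈ S x y, ∀ v ∈ S x y, S u v ⊆ S x y := by
  intro u hu v hv
  rcases eq_or_eq_of_not_easy hsymm hhier hhard hu with hxu | huy
  · rw [← hxu] at hv ⊢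
    exact hsymm u v ▸ (hhier x u v hv).2
  · rw [← huy] at hv ⊢
    exact (hhier u y v hv).1

/-- For a hard pair `{x,y}` of a symmetric hierarchical safe-set family,
`S(u,v) ⊆ S(x,y)` for all `u, v ∈ S(x,y)`. -/
theorem stmt15 {V : Type*} [Fintype V] [DecidableEq V] (S : V → V → Finset V)
    (hmem : ∀ x y, x ∈ S x y ∧ y ∈ S x y)
    (hsymm : ∀ x y, S x y = S y x)
    (hhier : ∀ x y z, z ∈ S x y → S x z ⊆ S x y ∧ S z y ⊆ S x y)
    (x y : V) (hhard : ¬ Easy S x y) :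
    ∀ u ∈ S x y, ∀ v ∈ S x y, S u v ⊆ S x y :=
  stmt15_general S hsymm hhier x y hhard
end

section
/- Let V be a finite set with a symmetric hierarchical safe-set family, let ⪯ be a linear order on the hard pairs such that {a,b} ⪯ {c,d} implies |S(a,b)| ≤ |S(c,d)|, let OPT be a feasible edge set of minimum cardinality with each edge assigned to the ⪯-first hard pair whose safe set contains both its endpoints, and let (A_k) be a greedy run: processing the hard pairs p_1 ≺ p_2 ≺ … in order, A_0 = ∅ and A_k = A_{k−1} ∪ F_k where F_k is a minimum-cardinality set of edges with both endpoints in S(p_k) making the restriction of A_{k−1} ∪ F_k to S(p_k) connected. Then for every hard pair {x,y} = p_k, the endpoints of any edge of OPT assigned to a pair strictly ⪯-before {x,y} with both endpoints in S(x,y) are connected in the restriction of A_{k−1} to S(x,y). -/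
/-! Fix the pair `p_j` of the edge and `p_k`, and induct on `|S(u,v)|` over pairs `u, v` lying in
both `S(p_j)` and `S(p_k)`; the safe set of a hard pair is closed under taking safe sets of its
points, so this region is too. An easy pair splits at `z` into two pairs with smaller safe sets.
A hard pair `{u,v}` has `S(u,v) ⊆ S(p_j)`, so by the size-monotonicity of the order `S(u,v)` is
the safe set of some `p_i` with `i ≤ j < k`; the greedy step at `i` connected `S(p_i)` with edges
of `A_{i+1} ⊆ A_k` inside `S(p_i) ⊆ S(p_k)`. -/

section

variable {V : Type*}

def restrictGraph (E : Finset (Sym2 V)) (T : Finset V) : SimpleGraph V :=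
  SimpleGraph.fromEdgeSet {e | e ∈ E ∧ ∀ w ∈ e, w ∈ T}

theorem restrictGraph_mono {E E' : Finset (Sym2 V)} {T T' : Finset V} (hE : E ⊆ E')
    (hT : T ⊆ T') : restrictGraph E T ≤ restrictGraph E' T' :=
  SimpleGraph.fromEdgeSet_mono fun _ ⟨he, hw⟩ ↦ ⟨hE he, fun w hwe ↦ hT (hw w hwe)⟩

variable [DecidableEq V] {S : V → V → Finset V}

theorem safe_subset_of_not_easy (hsymm : ∀ x y, S x y = S y x)
    (hhier : ∀ x y z, z ∈ S x y → S x z ⊆ S x y ∧ S z y ⊆ S x y)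
    {a b x y : V} (hab : ¬ Easy S a b) (hx : x ∈ S a b) (hy : y ∈ S a b) :
    S x y ⊆ S a b := by
  -- hardness forces `S(a,x)` or `S(b,x)` to be all of `S(a,b)`, and then it contains `y`
  have key : ∀ c, S c x = S a b → S x y ⊆ S a b := fun c hc ↦ by
    rw [← hc, hsymm c x] at hy ⊢
    exact (hhier x c y hy).1
  by_cases hax : S a x = S a b
  · exact key a hax
  by_cases hbx : S b x = S a b
  · exact key b hbx
  have hbx' : S b x ⊆ S a b := hsymm b x ▸ (hhier a b x hx).2
  exact absurd ⟨x, hx, (hhier a b x hx).1.ssubset_of_ne hax, hbx'.ssubset_of_ne hbx⟩ hab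

theorem reachable_of_hard_reachable {G : SimpleGraph V} {R : Set V}
    (hsymm : ∀ x y, S x y = S y x) (hR : ∀ x ∈ R, ∀ y ∈ R, ↑(S x y) ⊆ R)
    (hhard : ∀ x ∈ R, ∀ y ∈ R, x ≠ y → ¬ Easy S x y → G.Reachable x y)
    {x y : V} (hx : x ∈ R) (hy : y ∈ R) : G.Reachable x y := by
  by_cases hxy : x = y
  · exact hxy ▸ SimpleGraph.Reachable.refl x
  by_cases hEasy : Easy S x y
  · obtain ⟨z, hz, hxz, hyz⟩ := hEasy
    have hzR : z ∈ R := hR x hx y hy hz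
    have : (S x z).card < (S x y).card := Finset.card_lt_card hxz
    have : (S z y).card < (S x y).card := hsymm z y ▸ Finset.card_lt_card hyz
    exact (reachable_of_hard_reachable hsymm hR hhard hx hzR).trans
      (reachable_of_hard_reachable hsymm hR hhard hzR hy)
  · exact hhard x hx y hy hxy hEasy
termination_by (S x y).card

theorem exists_le_safe_eq_of_not_easy {N : ℕ} {ps : Fin N → V × V}
    (hsymm : ∀ x y, S x y = S y x)
    (hpsSurj : ∀ x y : V, x ≠ y → ¬ Easy S x y → ∃ k, ps k = (x, y) ∨ ps k = (y, x))
    (hpsMono : ∀ k k' : Fin N, k ≤ k' →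
      (S (ps k).1 (ps k).2).card ≤ (S (ps k').1 (ps k').2).card)
    {u w : V} (huw : u ≠ w) (hhard : ¬ Easy S u w) {m : Fin N}
    (hsub : S u w ⊆ S (ps m).1 (ps m).2) :
    ∃ j ≤ m, S (ps j).1 (ps j).2 = S u w := by
  obtain ⟨i, hi⟩ := hpsSurj u w huw hhard
  have hSi : S (ps i).1 (ps i).2 = S u w := by
    rcases hi with hi | hi <;> rw [hi]
    exact hsymm w u
  rcases le_total i m with him | hmi
  · exact ⟨i, him, hSi⟩
  · exact ⟨m, le_rfl, (Finset.eq_of_subset_of_card_le hsub (hSi ▸ hpsMono m i hmi)).symm⟩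

theorem greedy_reachable {N : ℕ} {T : Fin N → Finset V} {A : ℕ → Finset (Sym2 V)}
    {Fk : Fin N → Finset (Sym2 V)} (hAsucc : ∀ k : Fin N, A (k + 1) = A k ∪ Fk k)
    (hFkConn : ∀ k : Fin N, ∀ u ∈ T k, ∀ v ∈ T k,
      (restrictGraph (A k ∪ Fk k) (T k)).Reachable u v)
    {j k : Fin N} (hjk : j < k) (hT : T j ⊆ T k) {u v : V} (hu : u ∈ T j) (hv : v ∈ T j) :
    (restrictGraph (A k) (T k)).Reachable u v := by
  have hA : MonotoneOn A (Set.Iic N) :=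
    monotoneOn_of_le_add_one Set.ordConnected_Iic fun n _ _ hn ↦
      (hAsucc ⟨n, hn⟩).symm ▸ Finset.subset_union_left
  have hsub : A j ∪ Fk j ⊆ A k :=
    hAsucc j ▸ hA (Set.mem_Iic.2 j.isLt) (Set.mem_Iic.2 k.isLt.le) (Nat.succ_le_of_lt hjk)
  exact (hFkConn j u hu v hv).mono (restrictGraph_mono hsub hT)

end

theorem stmt18_general {V : Type*} [DecidableEq V] (S : V → V → Finset V)
    (hmem : ∀ x y, x ∈ S x y ∧ y ∈ S x y)
    (hsymm : ∀ x y, S x y = S y x)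
    (hhier : ∀ x y z, z ∈ S x y → S x z ⊆ S x y ∧ S z y ⊆ S x y)
    (OPT : Finset (Sym2 V))
    -- `ps` is an enumeration of the hard pairs, sorted by safe-set cardinality
    (N : ℕ) (ps : Fin N → V × V)
    (hpsHard : ∀ k, (ps k).1 ≠ (ps k).2 ∧ ¬ Easy S (ps k).1 (ps k).2)
    (hpsSurj : ∀ x y : V, x ≠ y → ¬ Easy S x y →
      ∃ k, ps k = (x, y) ∨ ps k = (y, x))
    (hpsMono : ∀ k k' : Fin N, k ≤ k' →
      (S (ps k).1 (ps k).2).card ≤ (S (ps k').1 (ps k').2).card)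
    -- `asgn` assigns each edge of `OPT` to the first hard pair whose safe set
    -- contains both endpoints
    (asgn : Sym2 V → Fin N)
    (hasgnMem : ∀ e ∈ OPT, ∀ w ∈ e, w ∈ S (ps (asgn e)).1 (ps (asgn e)).2)
    -- the greedy run
    (A : ℕ → Finset (Sym2 V)) (Fk : Fin N → Finset (Sym2 V))
    (hAsucc : ∀ k : Fin N, A (k + 1) = A k ∪ Fk k)
    (hFkConn : ∀ k : Fin N, ∀ u ∈ S (ps k).1 (ps k).2, ∀ v ∈ S (ps k).1 (ps k).2,
      (SimpleGraph.fromEdgeSet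
        {e : Sym2 V | e ∈ A k ∪ Fk k ∧ ∀ w ∈ e, w ∈ S (ps k).1 (ps k).2}).Reachable u v) :
    ∀ k : Fin N, ∀ e ∈ OPT, asgn e < k →
      (∀ w ∈ e, w ∈ S (ps k).1 (ps k).2) →
      ∀ x y : V, e = s(x, y) →
        (SimpleGraph.fromEdgeSet
          {e' : Sym2 V | e' ∈ A k ∧ ∀ w ∈ e', w ∈ S (ps k).1 (ps k).2}).Reachable x y := by
  intro k e he hlt hek x y hexy
  have hx : x ∈ e := hexy ▸ Sym2.mem_mk_left x y
  have hy : y ∈ e := hexy ▸ Sym2.mem_mk_right x y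
  have hclosed (i : Fin N) {u w : V} (hu : u ∈ S (ps i).1 (ps i).2)
      (hw : w ∈ S (ps i).1 (ps i).2) : S u w ⊆ S (ps i).1 (ps i).2 :=
    safe_subset_of_not_easy hsymm hhier (hpsHard i).2 hu hw
  let R : Set V := {v | v ∈ S (ps (asgn e)).1 (ps (asgn e)).2 ∧ v ∈ S (ps k).1 (ps k).2}
  refine reachable_of_hard_reachable (R := R) hsymm ?_ ?_
    ⟨hasgnMem e he x hx, hek x hx⟩ ⟨hasgnMem e he y hy, hek y hy⟩
  · rintro u ⟨hue, huk⟩ w ⟨hwe, hwk⟩ z hz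
    exact ⟨hclosed _ hue hwe hz, hclosed k huk hwk hz⟩
  · rintro u ⟨hue, huk⟩ w ⟨hwe, hwk⟩ huw hhard
    obtain ⟨j, hje, hSj⟩ :=
      exists_le_safe_eq_of_not_easy hsymm hpsSurj hpsMono huw hhard (hclosed _ hue hwe)
    refine greedy_reachable (T := fun i ↦ S (ps i).1 (ps i).2) hAsucc hFkConn
      (hje.trans_lt hlt) (hSj ▸ hclosed k huk hwk) ?_ ?_
    · exact hSj ▸ (hmem u w).1
    · exact hSj ▸ (hmem u w).2

/-- Let `OPT` be a minimum feasible edge set with each edge assigned (by `asgn`)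
to the `⪯`-first hard pair whose safe set contains both of its endpoints, where the
hard pairs are enumerated by `ps` in an order monotone in safe-set cardinality,
and let `A` be a greedy run, with `A (k+1) = A k ∪ Fk k` where `Fk k` is a
minimum-cardinality set of edges inside `S(p_k)` making the restriction of
`A k ∪ Fk k` to `S(p_k)` connected.  Then for every hard pair `p_k`, the endpoints
of any edge of `OPT` assigned to a pair strictly before `p_k` whose endpoints both
lie in `S(p_k)` are connected in the restriction of `A k` to `S(p_k)`. -/
theorem stmt18 {V : Type*} [Fintype V] [DecidableEq V] (S : V → V → Finset V)
    (hmem : ∀ x y, x ∈ S x y ∧ y ∈ S x y)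
    (hsymm : ∀ x y, S x y = S y x)
    (hhier : ∀ x y z, z ∈ S x y → S x z ⊆ S x y ∧ S z y ⊆ S x y)
    (OPT : Finset (Sym2 V))
    (hfeas : ∀ x y, SafeWalk ↑OPT ↑(S x y) x y)
    (hmin : ∀ G' : Finset (Sym2 V), (∀ x y, SafeWalk ↑G' ↑(S x y) x y) →
      OPT.card ≤ G'.card)
    -- `ps` is an enumeration of the hard pairs, sorted by safe-set cardinality
    (N : ℕ) (ps : Fin N → V × V)
    (hpsHard : ∀ k, (ps k).1 ≠ (ps k).2 ∧ ¬ Easy S (ps k).1 (ps k).2)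
    (hpsSurj : ∀ x y : V, x ≠ y → ¬ Easy S x y →
      ∃ k, ps k = (x, y) ∨ ps k = (y, x))
    (hpsInj : ∀ k k' : Fin N,
      (ps k' = ps k ∨ ps k' = ((ps k).2, (ps k).1)) → k' = k)
    (hpsMono : ∀ k k' : Fin N, k ≤ k' →
      (S (ps k).1 (ps k).2).card ≤ (S (ps k').1 (ps k').2).card)
    -- `asgn` assigns each edge of `OPT` to the first hard pair whose safe set
    -- contains both endpoints
    (asgn : Sym2 V → Fin N)
    (hasgnMem : ∀ e ∈ OPT, ∀ w ∈ e, w ∈ S (ps (asgn e)).1 (ps (asgn e)).2)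
    (hasgnMin : ∀ e ∈ OPT, ∀ k : Fin N,
      (∀ w ∈ e, w ∈ S (ps k).1 (ps k).2) → asgn e ≤ k)
    -- the greedy run
    (A : ℕ → Finset (Sym2 V)) (Fk : Fin N → Finset (Sym2 V))
    (hA0 : A 0 = ∅)
    (hAsucc : ∀ k : Fin N, A (k + 1) = A k ∪ Fk k)
    (hFkIn : ∀ k : Fin N, ∀ e ∈ Fk k, ∀ w ∈ e, w ∈ S (ps k).1 (ps k).2)
    (hFkConn : ∀ k : Fin N, ∀ u ∈ S (ps k).1 (ps k).2, ∀ v ∈ S (ps k).1 (ps k).2,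
      (SimpleGraph.fromEdgeSet
        {e : Sym2 V | e ∈ A k ∪ Fk k ∧ ∀ w ∈ e, w ∈ S (ps k).1 (ps k).2}).Reachable u v)
    (hFkMin : ∀ k : Fin N, ∀ F' : Finset (Sym2 V),
      (∀ e ∈ F', ∀ w ∈ e, w ∈ S (ps k).1 (ps k).2) →
      (∀ u ∈ S (ps k).1 (ps k).2, ∀ v ∈ S (ps k).1 (ps k).2,
        (SimpleGraph.fromEdgeSet
          {e : Sym2 V | e ∈ A k ∪ F' ∧ ∀ w ∈ e, w ∈ S (ps k).1 (ps k).2}).Reachable u v) →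
      (Fk k).card ≤ F'.card) :
    ∀ k : Fin N, ∀ e ∈ OPT, asgn e < k →
      (∀ w ∈ e, w ∈ S (ps k).1 (ps k).2) →
      ∀ x y : V, e = s(x, y) →
        (SimpleGraph.fromEdgeSet
          {e' : Sym2 V | e' ∈ A k ∧ ∀ w ∈ e', w ∈ S (ps k).1 (ps k).2}).Reachable x y :=
  stmt18_general S hmem hsymm hhier OPT N ps hpsHard hpsSurj hpsMono asgn hasgnMem A Fk hAsucc
    hFkConn
end
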